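/- Under the cover assumptions with Ψ_j the Dirac functional at a vertex v_j ∈ S_j, if f(v_j) = 0 for all j ∈ J then ‖f‖² ≤ (sup_j |S_j| / Λ) ⟨f, Lf⟩, where Λ = inf_j λ_{1,j}. -/

import Mathlib

open Finset

noncomputable def lap {V : Type*} [Fintype V] (w : V → V → ℝ) (f : V → ℂ) : V → ℂ :=
  fun v => ∑ u, (f v - f u) * (w v u : ℂ)

noncomputable def gip {V : Type*} [Fintype V] (f g : V → ℂ) : ℂ :=
  ∑ v, f v * (starRingEnd ℂ) (g v)

noncomputable def gradSq {V : Type*} [Fintype V] (w : V → V → ℝ) (f : V → ℂ) : ℝ :=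
  (1 / 2) * ∑ u, ∑ v, ‖f u - f v‖ ^ 2 * w u v

noncomputable def normSq {V : Type*} [Fintype V] (f : V → ℂ) : ℝ := ∑ v, ‖f v‖ ^ 2

/-- The squared weighted gradient norm of the subgraph induced on `S`
(only edges with both ends in `S`). -/
noncomputable def gradSqOn {V : Type*} (w : V → V → ℝ) (S : Finset V) (f : V → ℂ) : ℝ :=
  (1 / 2) * ∑ u ∈ S, ∑ v ∈ S, ‖f u - f v‖ ^ 2 * w u v

/-- `μ` is an eigenvalue of the Laplacian of the subgraph induced on `S`. -/
def IsEigenOn {V : Type*} (w : V → V → ℝ) (S : Finset V) (μ : ℝ) : Prop :=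
  ∃ g : V → ℂ, g ≠ 0 ∧ (∀ v, v ∉ S → g v = 0) ∧
    ∀ v ∈ S, ∑ u ∈ S, (g v - g u) * (w v u : ℂ) = (μ : ℂ) * g v

/-- The functional `Ψ(f) = ⟨f, ψ⟩` computed over `S`. -/
noncomputable def PsiOn {V : Type*} (S : Finset V) (ψ f : V → ℂ) : ℂ :=
  ∑ v ∈ S, f v * (starRingEnd ℂ) (ψ v)

/-- The induced subgraph on `S` (edges of nonzero weight inside `S`) is connected. -/
def IndConnected {V : Type*} (w : V → V → ℝ) (S : Finset V) : Prop :=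
  (SimpleGraph.fromRel fun u v : {x : V // x ∈ S} => w u.1 v.1 ≠ 0).Connected

/-! On a part `S` with vertex count `n`, let `m` be the mean of `f` over `S`. The induced subgraph
is connected, so the kernel of its Laplacian consists of the constants and `f - m` is orthogonal
to it; the spectral theorem then gives `λ ‖f - m‖² ≤ ⟨f - m, L_S (f - m)⟩ = ⟨f, L_S f⟩`. As `f`
vanishes at a vertex of `S`, Cauchy–Schwarz gives `|∑ f|² ≤ (n - 1) ‖f‖²`, which turns the
variance identity `n ‖f - m‖² = n ‖f‖² - |∑ f|²` into `‖f‖² ≤ n ‖f - m‖²`. Summing over the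
disjoint parts, the gradient sums of the induced subgraphs add up to at most that of `G`, which
equals `⟨f, L f⟩` by Green's identity. -/

open Function Module.End ComplexConjugate
open scoped InnerProductSpace

theorem LinearMap.IsSymmetric.mul_norm_sq_le_re_inner_map_self
    {𝕜 E : Type*} [RCLike 𝕜] [NormedAddCommGroup E] [InnerProductSpace 𝕜 E]
    [FiniteDimensional 𝕜 E] {T : E →ₗ[𝕜] E} (hT : T.IsSymmetric) {c : ℝ}
    (hc : ∀ μ : ℝ, μ ≠ 0 → HasEigenvalue T μ → c ≤ μ) {x : E}
    (hx : ∀ y, T y = 0 → ⟪y, x⟫_𝕜 = 0) :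
    c * ‖x‖ ^ 2 ≤ RCLike.re ⟪T x, x⟫_𝕜 := by
  set b := hT.eigenvectorBasis rfl
  set μ := hT.eigenvalues rfl
  have hquad : RCLike.re ⟪T x, x⟫_𝕜 = ∑ i, μ i * ‖⟪b i, x⟫_𝕜‖ ^ 2 := by
    rw [← b.sum_inner_mul_inner (T x) x, map_sum]
    refine sum_congr rfl fun i _ => ?_
    rw [hT x (b i), hT.apply_eigenvectorBasis, inner_smul_right, ← inner_conj_symm x (b i),
      mul_assoc, RCLike.conj_mul]
    norm_cast
  rw [← b.sum_sq_norm_inner_right, mul_sum, hquad]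
  refine sum_le_sum fun i _ => ?_
  by_cases hi : ⟪b i, x⟫_𝕜 = 0
  · simp [hi]
  refine mul_le_mul_of_nonneg_right (hc _ ?_ (hT.hasEigenvalue_eigenvalues rfl i)) (by positivity)
  intro h0
  refine hi (hx _ ?_)
  rw [hT.apply_eigenvectorBasis]
  exact smul_eq_zero_of_left (by exact_mod_cast h0) _

theorem norm_sum_sq_le_card_sub_one_mul_of_eq_zero {ι E : Type*} [Fintype ι]
    [SeminormedAddCommGroup E] (h : ι → E) {i₀ : ι} (hi₀ : h i₀ = 0) :
    ‖∑ u, h u‖ ^ 2 ≤ (Fintype.card ι - 1) * ∑ v, ‖h v‖ ^ 2 := by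
  classical
  set s := univ.erase i₀
  have hs : ∀ g : ι → ℝ, g i₀ = 0 → ∑ v, g v = ∑ v ∈ s, g v := fun g hg => by
    rw [← add_sum_erase _ _ (mem_univ i₀), hg, zero_add]
  have hcard : (s.card : ℝ) = Fintype.card ι - 1 := by
    rw [card_erase_of_mem (mem_univ _), card_univ, Nat.cast_sub (Fintype.card_pos_iff.2 ⟨i₀⟩),
      Nat.cast_one]
  calc ‖∑ u, h u‖ ^ 2 ≤ (∑ u, ‖h u‖) ^ 2 := by gcongr; exact norm_sum_le _ _
    _ = (∑ u ∈ s, ‖h u‖) ^ 2 := by rw [hs _ (by simp [hi₀])]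
    _ ≤ s.card * ∑ u ∈ s, ‖h u‖ ^ 2 := sq_sum_le_card_mul_sum_sq
    _ = (Fintype.card ι - 1) * ∑ v, ‖h v‖ ^ 2 := by rw [hcard, hs _ (by simp [hi₀])]

theorem sum_sub_mean_eq_zero {ι E : Type*} [Fintype ι] [Nonempty ι] [AddCommGroup E]
    [Module ℝ E] (h : ι → E) : ∑ v, (h v - (Fintype.card ι : ℝ)⁻¹ • ∑ u, h u) = 0 := by
  rw [sum_sub_distrib, sum_const, card_univ, ← Nat.cast_smul_eq_nsmul ℝ, smul_smul,
    mul_inv_cancel₀ (by positivity), one_smul, sub_self]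

section Mean

variable {ι E : Type*} [Fintype ι] [NormedAddCommGroup E] [InnerProductSpace ℝ E]

theorem card_mul_sum_norm_sub_mean_sq (h : ι → E) :
    (Fintype.card ι : ℝ) * ∑ v, ‖h v - (Fintype.card ι : ℝ)⁻¹ • ∑ u, h u‖ ^ 2
      = Fintype.card ι * ∑ v, ‖h v‖ ^ 2 - ‖∑ u, h u‖ ^ 2 := by
  rcases isEmpty_or_nonempty ι with hι | hι
  · simp
  have hn : (Fintype.card ι : ℝ) ≠ 0 := by positivity
  simp only [norm_sub_sq_real, sum_add_distrib, sum_sub_distrib, ← sum_inner, sum_const,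
    card_univ, nsmul_eq_mul, real_inner_smul_right, real_inner_self_eq_norm_sq, norm_smul,
    mul_pow, Real.norm_eq_abs, sq_abs, ← mul_sum]
  field_simp
  ring

theorem sum_norm_sq_le_card_mul_sum_norm_sub_mean_sq (h : ι → E) {i₀ : ι} (hi₀ : h i₀ = 0) :
    ∑ v, ‖h v‖ ^ 2 ≤ Fintype.card ι * ∑ v, ‖h v - (Fintype.card ι : ℝ)⁻¹ • ∑ u, h u‖ ^ 2 := by
  rw [card_mul_sum_norm_sub_mean_sq]
  linarith [norm_sum_sq_le_card_sub_one_mul_of_eq_zero h hi₀]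

end Mean

theorem SimpleGraph.Connected.eq_of_forall_adj {V α : Type*} {G : SimpleGraph V}
    (hG : G.Connected) {f : V → α} (hf : ∀ u v, G.Adj u v → f u = f v) (u v : V) :
    f u = f v := by
  induction (G.reachable_iff_reflTransGen u v).1 (hG u v) with
  | refl => rfl
  | tail _ hadj ih => exact ih.trans (hf _ _ hadj)

section WeightedGraph

variable {ι : Type*} [Fintype ι] {ω : ι → ι → ℝ}

theorem gip_lap_self_eq_gradSq (hsym : ∀ u v, ω u v = ω v u) (f : ι → ℂ) :
    gip f (lap ω f) = gradSq ω f := by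
  have hA : gip f (lap ω f) = ∑ v, ∑ u, f v * conj (f v - f u) * ω v u := by
    simp only [gip, lap, map_sum, map_mul, Complex.conj_ofReal, mul_sum, mul_assoc]
  have hB : gip f (lap ω f) = ∑ v, ∑ u, f u * conj (f u - f v) * ω v u := by
    rw [hA, sum_comm]
    simp only [hsym]
  have h2 : 2 * gip f (lap ω f) = ∑ v, ∑ u, (‖f v - f u‖ : ℂ) ^ 2 * ω v u := by
    rw [two_mul]
    nth_rw 1 [hA]
    rw [hB, ← sum_add_distrib]
    refine sum_congr rfl fun v _ => ?_
    rw [← sum_add_distrib]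
    refine sum_congr rfl fun u _ => ?_
    rw [← Complex.mul_conj', map_sub, map_sub]
    ring
  simp only [gradSq]
  push_cast
  linear_combination h2 / 2

variable (ω) in
noncomputable def lapOp : EuclideanSpace ℂ ι →ₗ[ℂ] EuclideanSpace ℂ ι where
  toFun g := WithLp.toLp 2 (lap ω g)
  map_add' x y := by
    ext v
    simp only [lap, PiLp.add_apply, ← sum_add_distrib]
    exact sum_congr rfl fun u _ => by ring
  map_smul' c x := by
    ext v
    simp only [lap, PiLp.smul_apply, smul_eq_mul, RingHom.id_apply, mul_sum]
    exact sum_congr rfl fun u _ => by ring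

variable (ω) in
theorem lapOp_apply (g : EuclideanSpace ℂ ι) : lapOp ω g = WithLp.toLp 2 (lap ω g) := rfl

theorem gip_eq_inner (x y : EuclideanSpace ℂ ι) : gip x y = ⟪y, x⟫_ℂ := by
  simp only [gip, PiLp.inner_apply, RCLike.inner_apply]

theorem isSymmetric_lapOp (hsym : ∀ u v, ω u v = ω v u) : (lapOp ω).IsSymmetric := by
  refine (LinearMap.isSymmetric_iff_inner_map_self_real _).2 fun g => ?_
  rw [← gip_eq_inner, lapOp_apply, gip_lap_self_eq_gradSq hsym, Complex.conj_ofReal]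

theorem gradSq_nonneg (hnn : ∀ u v, 0 ≤ ω u v) (f : ι → ℂ) : 0 ≤ gradSq ω f :=
  mul_nonneg (by norm_num) <| sum_nonneg fun u _ => sum_nonneg fun v _ =>
    mul_nonneg (by positivity) (hnn u v)

theorem eq_of_gradSq_eq_zero (hnn : ∀ u v, 0 ≤ ω u v) {f : ι → ℂ} (hf : gradSq ω f = 0)
    {u v : ι} (huv : ω u v ≠ 0) : f u = f v := by
  have hterm (u v : ι) : 0 ≤ ‖f u - f v‖ ^ 2 * ω u v := mul_nonneg (by positivity) (hnn u v)
  have hsum : ∑ u, ∑ v, ‖f u - f v‖ ^ 2 * ω u v = 0 := by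
    simpa [gradSq] using hf
  rw [Fintype.sum_eq_zero_iff_of_nonneg fun u => sum_nonneg fun v _ => hterm u v] at hsum
  have huv0 := (Fintype.sum_eq_zero_iff_of_nonneg (hterm u)).1 (congrFun hsum u)
  simpa [huv, sub_eq_zero] using congrFun huv0 v

theorem gradSq_eq_zero_of_lap_eq_zero (hsym : ∀ u v, ω u v = ω v u) {f : ι → ℂ}
    (hf : lap ω f = 0) : gradSq ω f = 0 := by
  have h := gip_lap_self_eq_gradSq hsym f
  rw [hf] at h
  simpa [gip] using h.symm

theorem eq_of_lap_eq_zero (hsym : ∀ u v, ω u v = ω v u) (hnn : ∀ u v, 0 ≤ ω u v)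
    (hconn : (SimpleGraph.fromRel fun u v => ω u v ≠ 0).Connected) {f : ι → ℂ}
    (hf : lap ω f = 0) (u v : ι) : f u = f v := by
  refine hconn.eq_of_forall_adj (fun a b hab => ?_) u v
  have h0 := gradSq_eq_zero_of_lap_eq_zero hsym hf
  obtain ⟨-, hab | hba⟩ := hab
  · exact eq_of_gradSq_eq_zero hnn h0 hab
  · exact (eq_of_gradSq_eq_zero hnn h0 hba).symm

theorem gradSq_sub_const (f : ι → ℂ) (m : ℂ) : gradSq ω (fun v => f v - m) = gradSq ω f := by
  simp only [gradSq, sub_sub_sub_cancel_right]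

theorem inner_eq_zero_of_lapOp_eq_zero (hsym : ∀ u v, ω u v = ω v u) (hnn : ∀ u v, 0 ≤ ω u v)
    (hconn : (SimpleGraph.fromRel fun u v => ω u v ≠ 0).Connected) {e g : EuclideanSpace ℂ ι}
    (he : lapOp ω e = 0) (hg : ∑ v, g v = 0) : ⟪e, g⟫_ℂ = 0 := by
  rcases isEmpty_or_nonempty ι with hι | ⟨⟨i₀⟩⟩
  · simp [PiLp.inner_apply]
  have hconst := eq_of_lap_eq_zero hsym hnn hconn (congrArg WithLp.ofLp he)
  simp only [PiLp.inner_apply, RCLike.inner_apply, hconst _ i₀, ← sum_mul, hg, zero_mul]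

theorem mul_sum_norm_sq_le_card_mul_gradSq (hsym : ∀ u v, ω u v = ω v u)
    (hnn : ∀ u v, 0 ≤ ω u v) (hconn : (SimpleGraph.fromRel fun u v => ω u v ≠ 0).Connected)
    {c : ℝ} (hc₀ : 0 ≤ c) (hc : ∀ μ : ℝ, μ ≠ 0 → HasEigenvalue (lapOp ω) μ → c ≤ μ)
    {f : ι → ℂ} {i₀ : ι} (hf : f i₀ = 0) :
    c * ∑ v, ‖f v‖ ^ 2 ≤ Fintype.card ι * gradSq ω f := by
  have : Nonempty ι := ⟨i₀⟩
  set m : ℂ := (Fintype.card ι : ℝ)⁻¹ • ∑ u, f u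
  set g : EuclideanSpace ℂ ι := WithLp.toLp 2 fun v => f v - m
  have hgap : c * ‖g‖ ^ 2 ≤ gradSq ω f := by
    have h := (isSymmetric_lapOp hsym).mul_norm_sq_le_re_inner_map_self hc
      fun e he =>
        inner_eq_zero_of_lapOp_eq_zero (g := g) hsym hnn hconn he (sum_sub_mean_eq_zero f)
    rwa [← gip_eq_inner, lapOp_apply, gip_lap_self_eq_gradSq hsym, gradSq_sub_const] at h
  calc c * ∑ v, ‖f v‖ ^ 2 ≤ c * (Fintype.card ι * ∑ v, ‖f v - m‖ ^ 2) :=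
        mul_le_mul_of_nonneg_left (sum_norm_sq_le_card_mul_sum_norm_sub_mean_sq f hf) hc₀
    _ = Fintype.card ι * (c * ‖g‖ ^ 2) := by rw [EuclideanSpace.norm_sq_eq]; ring
    _ ≤ Fintype.card ι * gradSq ω f := by gcongr

end WeightedGraph

section InducedSubgraph

variable {V : Type*} {w : V → V → ℝ} {S : Finset V}

theorem IsEigenOn.of_hasEigenvalue_lapOp {μ : ℝ}
    (h : HasEigenvalue (lapOp fun u v : S => w u v) μ) : IsEigenOn w S μ := by
  classical
  obtain ⟨e, he⟩ := h.exists_hasEigenvector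
  have heq := mem_eigenspace_iff.1 he.1
  set g : V → ℂ := fun v => if hv : v ∈ S then e ⟨v, hv⟩ else 0
  have hg (u : S) : g u = e u := dif_pos u.2
  refine ⟨g, fun hg0 => he.2 ?_, fun v hv => dif_neg hv, fun v hv => ?_⟩
  · ext u
    simpa [hg] using congrFun hg0 u
  · rw [← sum_coe_sort, hg ⟨v, hv⟩]
    simp only [hg]
    exact congrArg (fun x : EuclideanSpace ℂ S => x ⟨v, hv⟩) heq

theorem gradSqOn_eq_gradSq (f : V → ℂ) :
    gradSqOn w S f = gradSq (fun u v : S => w u v) fun v => f v := by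
  simp only [gradSqOn, gradSq, ← sum_coe_sort S]

theorem gradSqOn_nonneg (hnn : ∀ u v, 0 ≤ w u v) (f : V → ℂ) : 0 ≤ gradSqOn w S f :=
  gradSqOn_eq_gradSq f ▸ gradSq_nonneg (ω := fun u v : S => w u v) (fun u v => hnn u v) _

theorem mul_sum_norm_sq_le_card_mul_gradSqOn (hsym : ∀ u v, w u v = w v u)
    (hnn : ∀ u v, 0 ≤ w u v) (hconn : IndConnected w S) {c : ℝ} (hc₀ : 0 ≤ c)
    (hc : ∀ μ : ℝ, μ ≠ 0 → IsEigenOn w S μ → c ≤ μ) {f : V → ℂ} {v₀ : V} (hv₀ : v₀ ∈ S)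
    (hf : f v₀ = 0) : c * ∑ v ∈ S, ‖f v‖ ^ 2 ≤ S.card * gradSqOn w S f := by
  have h := mul_sum_norm_sq_le_card_mul_gradSq (ω := fun u v : S => w u v)
    (fun u v => hsym u v) (fun u v => hnn u v) hconn hc₀
    (fun μ hμ hμS => hc μ hμ (.of_hasEigenvalue_lapOp hμS)) (f := fun v => f v)
    (i₀ := ⟨v₀, hv₀⟩) hf
  rwa [sum_coe_sort S fun v => ‖f v‖ ^ 2, Fintype.card_coe, ← gradSqOn_eq_gradSq] at h

end InducedSubgraph

section Cover

variable {V J : Type*} [Fintype V] [Fintype J] {S : J → Finset V}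

theorem sum_eq_sum_sum_of_cover {β : Type*} [AddCommMonoid β] (hcover : ∀ v, ∃ j, v ∈ S j)
    (hdisj : Pairwise (Disjoint on S)) (g : V → β) : ∑ v, g v = ∑ j, ∑ v ∈ S j, g v := by
  classical
  rw [← sum_biUnion (hdisj.set_pairwise _), eq_comm]
  congr
  exact eq_univ_of_forall fun v => mem_biUnion.2 <| (hcover v).imp fun j hj => ⟨mem_univ j, hj⟩

theorem sum_gradSqOn_le_gradSq {w : V → V → ℝ} (hnn : ∀ u v, 0 ≤ w u v)
    (hdisj : Pairwise (Disjoint on S)) (f : V → ℂ) : ∑ j, gradSqOn w (S j) f ≤ gradSq w f := by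
  classical
  have hterm (u v : V) : 0 ≤ ‖f u - f v‖ ^ 2 * w u v := mul_nonneg (by positivity) (hnn u v)
  calc ∑ j, gradSqOn w (S j) f ≤ ∑ j, (1 / 2) * ∑ u ∈ S j, ∑ v, ‖f u - f v‖ ^ 2 * w u v := by
        unfold gradSqOn
        gcongr
        · exact fun v _ _ => hterm _ v
        · exact subset_univ _
    _ ≤ gradSq w f := by
        rw [← mul_sum, gradSq, ← sum_biUnion (hdisj.set_pairwise _)]
        gcongr
        · exact fun u _ _ => sum_nonneg fun v _ => hterm u v
        · exact subset_univ _

end Cover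

theorem poincare_many_zeros_general
    {V : Type*} [Fintype V] {J : Type*} [Fintype J] (w : V → V → ℝ)
    (hsym : ∀ u v, w u v = w v u) (hnn : ∀ u v, 0 ≤ w u v)
    (S : J → Finset V)
    (hcover : ∀ v : V, ∃ j, v ∈ S j)
    (hdisj : ∀ i j, i ≠ j → Disjoint (S i) (S j))
    (hconn : ∀ j, IndConnected w (S j))
    (vtx : J → V) (hvtx : ∀ j, vtx j ∈ S j)
    (lam : J → ℝ)
    (hlam : ∀ j, IsLeast {μ : ℝ | μ ≠ 0 ∧ IsEigenOn w (S j) μ} (lam j))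
    (M Λ : ℝ)
    (hM : IsLUB (Set.range fun j => ((S j).card : ℝ)) M)
    (hΛ : IsGLB (Set.range lam) Λ) (hΛpos : 0 < Λ)
    (f : V → ℂ) (hzero : ∀ j, f (vtx j) = 0) :
    normSq f ≤ (M / Λ) * (gip f (lap w f)).re := by
  have hM₀ : 0 ≤ M := by
    rcases isEmpty_or_nonempty J with hJ | ⟨⟨j⟩⟩
    · rw [Set.range_eq_empty, isLUB_empty_iff] at hM
      exact absurd hM (not_isBot M)
    · exact (Nat.cast_nonneg _).trans (hM.1 ⟨j, rfl⟩)
  have hpart (j : J) : Λ * ∑ v ∈ S j, ‖f v‖ ^ 2 ≤ M * gradSqOn w (S j) f :=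
    (mul_sum_norm_sq_le_card_mul_gradSqOn hsym hnn (hconn j) hΛpos.le
      (fun μ hμ hμj => (hΛ.1 ⟨j, rfl⟩).trans ((hlam j).2 ⟨hμ, hμj⟩)) (hvtx j) (hzero j)).trans
      (mul_le_mul_of_nonneg_right (hM.1 ⟨j, rfl⟩) (gradSqOn_nonneg hnn f))
  rw [div_mul_eq_mul_div, le_div_iff₀' hΛpos, gip_lap_self_eq_gradSq hsym, Complex.ofReal_re]
  calc Λ * normSq f = ∑ j, Λ * ∑ v ∈ S j, ‖f v‖ ^ 2 := by
        rw [normSq, sum_eq_sum_sum_of_cover hcover hdisj, mul_sum]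
    _ ≤ ∑ j, M * gradSqOn w (S j) f := sum_le_sum fun j _ => hpart j
    _ = M * ∑ j, gradSqOn w (S j) f := (mul_sum _ _ _).symm
    _ ≤ M * gradSq w f := mul_le_mul_of_nonneg_left (sum_gradSqOn_le_gradSq hnn hdisj f) hM₀

theorem poincare_many_zeros
    {V : Type*} [Fintype V] {J : Type*} [Fintype J] (w : V → V → ℝ)
    (hsym : ∀ u v, w u v = w v u) (hnn : ∀ u v, 0 ≤ w u v) (hdiag : ∀ v, w v v = 0)
    (S : J → Finset V)
    (hcover : ∀ v : V, ∃ j, v ∈ S j)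
    (hdisj : ∀ i j, i ≠ j → Disjoint (S i) (S j))
    (hcard : ∀ j, 1 < (S j).card)
    (hconn : ∀ j, IndConnected w (S j))
    (vtx : J → V) (hvtx : ∀ j, vtx j ∈ S j)
    (lam : J → ℝ)
    (hlam : ∀ j, IsLeast {μ : ℝ | μ ≠ 0 ∧ IsEigenOn w (S j) μ} (lam j))
    (M Λ : ℝ)
    (hM : IsLUB (Set.range fun j => ((S j).card : ℝ)) M)
    (hΛ : IsGLB (Set.range lam) Λ) (hΛpos : 0 < Λ)
    (f : V → ℂ) (hzero : ∀ j, f (vtx j) = 0) :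
    normSq f ≤ (M / Λ) * (gip f (lap w f)).re :=
  poincare_many_zeros_general w hsym hnn S hcover hdisj hconn vtx hvtx lam hlam M Λ hM hΛ hΛpos f
    hzero
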